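/- arXiv:2009.01412 — 9 statements merged into one kernel-verified Lean document; each statement's English description precedes it below -/
import Mathlib

section
/- The polynomial f(λ) = λ^{n+m} − λ^n − λ^m (with m a nonzero integer, n a positive integer, viewed after clearing denominators when m < 0) has no multiple complex root; that is, f(λ) = 0 and f'(λ) = 0 have no common solution λ ∈ ℂ∖{0}. -/
/-!
At a multiple root `l`, eliminating `l ^ (n + m)` between `f l = 0` and `l * f' l = 0` gives
`m * l ^ n = m - n` and `n * l ^ m = n - m`. Taking `log ‖·‖` and eliminating `log ‖l‖` yields
`n log n + (m - n) log (m - n) = m log m` (with `Real.log x = log |x|`). But `t ↦ t log t` is odd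
and strictly superadditive on positive reals, so `x log x + y log y = (x + y) log (x + y)` has no
solution with `x`, `y`, `x + y` all nonzero.
-/

open Real

theorem mul_log_add_mul_log_lt {x y : ℝ} (hx : 0 < x) (hy : 0 < y) :
    x * log x + y * log y < (x + y) * log (x + y) := by
  have hlx : log x < log (x + y) := log_lt_log hx (by linarith)
  have hly : log y < log (x + y) := log_lt_log hy (by linarith)
  nlinarith

theorem mul_log_add_mul_log_ne {x y : ℝ} (hx : x ≠ 0) (hy : y ≠ 0) (hxy : x + y ≠ 0) :
    x * log x + y * log y ≠ (x + y) * log (x + y) := by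
  -- `Real.log` is even, so `t ↦ t * log t` is odd and every sign pattern reduces to `0 < x`.
  wlog hx₀ : 0 < x generalizing x y
  · have h := this (neg_ne_zero.2 hx) (neg_ne_zero.2 hy) (by rwa [← neg_add, neg_ne_zero])
      (by linarith [hx.lt_or_gt.resolve_right hx₀])
    rw [← neg_add, log_neg_eq_log, log_neg_eq_log, log_neg_eq_log] at h
    contrapose! h
    linear_combination -h
  rcases hy.lt_or_gt with hy₀ | hy₀
  · rcases hxy.lt_or_gt with hxy₀ | hxy₀
    · have h := mul_log_add_mul_log_lt (neg_pos.2 hxy₀) hx₀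
      rw [show -(x + y) + x = -y by ring, log_neg_eq_log, log_neg_eq_log] at h
      exact (by linarith : x * log x + y * log y < _).ne
    · have h := mul_log_add_mul_log_lt hxy₀ (neg_pos.2 hy₀)
      rw [add_neg_cancel_right, log_neg_eq_log] at h
      exact (by linarith : (x + y) * log (x + y) < _).ne'
  · exact (mul_log_add_mul_log_lt hx₀ hy₀).ne

theorem mul_zpow_eq_of_multiple_root {K : Type*} [Field K] {m n : ℤ} {l : K} (hl : l ≠ 0)
    (hf : l ^ (n + m) - l ^ n - l ^ m = 0)
    (hf' : ((n + m : ℤ) : K) * l ^ (n + m - 1) - (n : K) * l ^ (n - 1)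
        - (m : K) * l ^ (m - 1) = 0) :
    (m : K) * l ^ n = m - n ∧ (n : K) * l ^ m = n - m := by
  rw [zpow_sub_one₀ hl, zpow_sub_one₀ hl, zpow_sub_one₀ hl] at hf'
  rw [zpow_add₀ hl] at hf hf'
  have hln := zpow_ne_zero n hl
  have hlm := zpow_ne_zero m hl
  field_simp at hf'
  push_cast at hf'
  have hsum : (m : K) * l ^ n + n * l ^ m = 0 := by linear_combination hf' - (n + m : K) * hf
  constructor
  · refine mul_right_cancel₀ hlm ?_
    linear_combination (m : K) * hf + hsum
  · refine mul_right_cancel₀ hln ?_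
    linear_combination (n : K) * hf + hsum

theorem log_intCast_add_mul_log_norm {l : ℂ} {a c k : ℤ} (hl : l ≠ 0) (ha : a ≠ 0)
    (h : (a : ℂ) * l ^ k = c) : log a + k * log ‖l‖ = log c := by
  have h' := congrArg (fun z => log ‖z‖) h
  simp only [norm_mul, norm_zpow, Complex.norm_intCast] at h'
  rwa [log_mul (by positivity) (by positivity), log_zpow, log_abs, log_abs] at h'

/-- The Laurent polynomial `f(λ) = λ^(n+m) - λ^n - λ^m` (m ≠ 0, n > 0) has no
multiple root: `f(λ) = 0` and `f'(λ) = 0` have no common solution `λ ∈ ℂ \ {0}`. -/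
theorem stmt_0 (m n : ℤ) (hm : m ≠ 0) (hn : 0 < n) :
    ¬ ∃ l : ℂ, l ≠ 0 ∧ l ^ (n + m) - l ^ n - l ^ m = 0 ∧
      ((n + m : ℤ) : ℂ) * l ^ (n + m - 1) - (n : ℂ) * l ^ (n - 1)
        - (m : ℂ) * l ^ (m - 1) = 0 := by
  rintro ⟨l, hl, hf, hf'⟩
  obtain ⟨hm_pow, hn_pow⟩ := mul_zpow_eq_of_multiple_root hl hf hf'
  have hmn : m ≠ n := by
    rintro rfl
    simp [hm, zpow_ne_zero _ hl] at hm_pow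
  have hm_log := log_intCast_add_mul_log_norm hl hm (c := m - n) (by push_cast; exact hm_pow)
  have hn_log := log_intCast_add_mul_log_norm hl hn.ne' (c := n - m) (by push_cast; exact hn_pow)
  push_cast at hm_log hn_log
  rw [← neg_sub, log_neg_eq_log] at hn_log
  refine mul_log_add_mul_log_ne (x := n) (y := m - n) (by positivity)
    (sub_ne_zero.2 (by exact_mod_cast hmn)) (by simpa using hm) ?_
  rw [add_sub_cancel]
  linear_combination (n : ℝ) * hn_log - (m : ℝ) * hm_log
end

section
/- There is no nonzero complex number λ with 0 < m < n satisfying λ^m = 1 − m/n and λ^n = 1 − n/m simultaneously. -/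
/-!
Taking absolute values, `r = |λ|` satisfies `r ^ m = (n - m) / n < 1` and `r ^ n = (n - m) / m`.
The first forces `r < 1`, hence `r ^ n ≤ r ^ m`; but `(n - m) / m > (n - m) / n`.
-/

lemma one_sub_div_lt_div_sub_one {x y : ℝ} (hx : 0 < x) (hxy : x < y) :
    1 - x / y < y / x - 1 := by
  have hy : 0 < y := hx.trans hxy
  rw [div_sub_one hx.ne', one_sub_div hy.ne']
  exact div_lt_div_of_pos_left (sub_pos.mpr hxy) hx hxy

lemma pow_ne_div_sub_one_of_pow_eq_one_sub_div {r x y : ℝ} {m n : ℕ} (hr : 0 ≤ r)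
    (hx : 0 < x) (hxy : x < y) (hmn : m ≤ n) (hm : r ^ m = 1 - x / y) :
    r ^ n ≠ y / x - 1 := by
  have hr1 : r ≤ 1 := by
    by_contra! h
    have : 1 ≤ r ^ m := one_le_pow₀ h.le
    have : 0 < x / y := div_pos hx (hx.trans hxy)
    linarith
  have : r ^ n ≤ r ^ m := pow_le_pow_of_le_one hr hr1 hmn
  have := one_sub_div_lt_div_sub_one hx hxy
  intro hn
  linarith

lemma Complex.norm_one_sub_ofReal (a : ℝ) : ‖(1 : ℂ) - a‖ = |1 - a| := by
  rw [← Complex.ofReal_one, ← Complex.ofReal_sub, Complex.norm_real, Real.norm_eq_abs]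

/-- There is no nonzero complex `λ` with `0 < m < n` satisfying both
`λ^m = 1 - m/n` and `λ^n = 1 - n/m`. -/
theorem stmt_2 (m n : ℕ) (hm : 0 < m) (hmn : m < n) :
    ¬ ∃ l : ℂ, l ≠ 0 ∧ l ^ m = 1 - (m : ℂ) / (n : ℂ) ∧
      l ^ n = 1 - (n : ℂ) / (m : ℂ) := by
  rintro ⟨l, -, h1, h2⟩
  have hm' : (0 : ℝ) < m := Nat.cast_pos.mpr hm
  have hmn' : (m : ℝ) < n := Nat.cast_lt.mpr hmn
  have hn' : (0 : ℝ) < n := hm'.trans hmn'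
  have e1 : ‖l‖ ^ m = 1 - (m : ℝ) / n := by
    rw [← norm_pow, h1, ← Complex.ofReal_natCast, ← Complex.ofReal_natCast n,
      ← Complex.ofReal_div, Complex.norm_one_sub_ofReal,
      abs_of_pos (sub_pos.mpr ((div_lt_one hn').mpr hmn'))]
  have e2 : ‖l‖ ^ n = (n : ℝ) / m - 1 := by
    rw [← norm_pow, h2, ← Complex.ofReal_natCast, ← Complex.ofReal_natCast m,
      ← Complex.ofReal_div, Complex.norm_one_sub_ofReal,
      abs_of_neg (sub_neg.mpr ((one_lt_div hm').mpr hmn')), neg_sub]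
  exact pow_ne_div_sub_one_of_pow_eq_one_sub_div (norm_nonneg l) hm' hmn' hmn.le e1 e2
end

section
/- For integers m, n, the assignment x ↦ x^{-1}, y ↦ y z^{1−n}, z ↦ z^{-1} extends to a group isomorphism from H_{m,n} = ⟨x,y,z ∣ x = [x^m,z^n][y,z]⟩ to H_{−m−1,n}. -/
/-- The commutator convention of the paper: `[a,b] = a⁻¹ b⁻¹ a b`. -/
def cmt {G : Type*} [Group G] (a b : G) : G := a⁻¹ * b⁻¹ * a * b

/-- Relator set of `H_{m,n} = ⟨x,y,z ∣ x = [x^m,z^n][y,z]⟩` (generators `0 ↦ x`,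
`1 ↦ y`, `2 ↦ z`). -/
def Hrels (m n : ℤ) : Set (FreeGroup (Fin 3)) :=
  {(FreeGroup.of 0)⁻¹ *
    (cmt ((FreeGroup.of 0) ^ m) ((FreeGroup.of 2) ^ n) *
      cmt (FreeGroup.of 1) (FreeGroup.of 2))}

/-- The Baumslag group `H_{m,n}`. -/
def Hmn (m n : ℤ) : Type := PresentedGroup (Hrels m n)

instance (m n : ℤ) : Group (Hmn m n) := by unfold Hmn; infer_instance

/-! Since `[y z^{1-n}, z⁻¹] = z^n [y,z]⁻¹ z^{-n}`, the relation `x = [x^{-m-1}, z^n][y,z]` of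
`H_{-m-1,n}` rearranges into the relation of `H_{m,n}` for `(x⁻¹, y z^{1-n}, z⁻¹)`, and
symmetrically with `m` and `-m-1` exchanged. So the substitution defines homomorphisms in both
directions; applied twice it fixes `x`, `y` and `z`, so they are mutually inverse. -/

lemma map_cmt {G H : Type*} [Group G] [Group H] (f : G →* H) (a b : G) :
    f (cmt a b) = cmt (f a) (f b) := by
  simp only [cmt, map_mul, map_inv]

def IsHRel {G : Type*} [Group G] (m n : ℤ) (x y z : G) : Prop :=
  x = cmt (x ^ m) (z ^ n) * cmt y z

lemma IsHRel.inv {G : Type*} [Group G] {m k n : ℤ} (hmk : m + k = -1) {x y z : G}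
    (h : IsHRel k n x y z) : IsHRel m n x⁻¹ (y * z ^ (1 - n)) z⁻¹ := by
  obtain rfl : k = -m - 1 := by omega
  have hyz : cmt y z = (cmt (x ^ (-m - 1)) (z ^ n))⁻¹ * x := eq_inv_mul_iff_mul_eq.mpr h.symm
  have hconj : cmt (y * z ^ (1 - n)) z⁻¹ = z ^ n * (cmt y z)⁻¹ * z ^ (-n) := by
    simp only [cmt]; group
  rw [IsHRel, hconj, hyz]
  simp only [cmt]
  group

namespace Hmn

variable {m n : ℤ} {G : Type*} [Group G]

/- The generators, typed as elements of `Hmn m n`: the type of `PresentedGroup.of 0` is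
`PresentedGroup (Hrels m n)`, which `simp` and `rw` do not identify with `Hmn m n`. -/

def x : Hmn m n := PresentedGroup.of 0

def y : Hmn m n := PresentedGroup.of 1

def z : Hmn m n := PresentedGroup.of 2

lemma isHRel_xyz (m n : ℤ) : IsHRel m n (x : Hmn m n) y z := by
  have hrel : PresentedGroup.mk (Hrels m n) ((FreeGroup.of 0)⁻¹ *
      (cmt (FreeGroup.of 0 ^ m) (FreeGroup.of 2 ^ n) * cmt (FreeGroup.of 1) (FreeGroup.of 2))) = 1 :=
    (QuotientGroup.eq_one_iff _).2 (Subgroup.subset_normalClosure rfl)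
  simp only [map_mul, map_inv, map_zpow, map_cmt] at hrel
  exact inv_mul_eq_one.mp hrel

def lift (a b c : G) (h : IsHRel m n a b c) : Hmn m n →* G :=
  PresentedGroup.toGroup (f := ![a, b, c]) <| by
    rintro r rfl
    simp only [map_mul, map_inv, map_zpow, map_cmt, FreeGroup.lift_apply_of]
    exact inv_mul_eq_one.mpr h

section lift

variable (a b c : G) (h : IsHRel m n a b c)

lemma lift_x : lift a b c h x = a := PresentedGroup.toGroup.of _

lemma lift_y : lift a b c h y = b := PresentedGroup.toGroup.of _

lemma lift_z : lift a b c h z = c := PresentedGroup.toGroup.of _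

end lift

lemma hom_ext {φ ψ : Hmn m n →* G} (hx : φ x = ψ x) (hy : φ y = ψ y) (hz : φ z = ψ z) :
    φ = ψ :=
  PresentedGroup.ext fun i => by fin_cases i <;> assumption

/-- `x ↦ x⁻¹`, `y ↦ y z^{1-n}`, `z ↦ z⁻¹`. -/
def invHom (m k n : ℤ) (hmk : m + k = -1) : Hmn m n →* Hmn k n :=
  lift _ _ _ ((isHRel_xyz k n).inv hmk)

lemma invHom_comp_invHom (m k n : ℤ) (hmk : m + k = -1) (hkm : k + m = -1) :
    (invHom k m n hkm).comp (invHom m k n hmk) = MonoidHom.id _ := by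
  apply hom_ext <;>
    simp only [invHom, MonoidHom.comp_apply, MonoidHom.id_apply, map_mul, map_inv, map_zpow,
      lift_x, lift_y, lift_z, inv_inv, inv_zpow, mul_inv_cancel_right]

def invEquiv (m k n : ℤ) (hmk : m + k = -1) : Hmn m n ≃* Hmn k n :=
  (invHom m k n hmk).toMulEquiv (invHom k m n (by omega))
    (invHom_comp_invHom m k n hmk _) (invHom_comp_invHom k m n _ hmk)

section invEquiv

variable (m k n : ℤ) (hmk : m + k = -1)

lemma invEquiv_x : invEquiv m k n hmk x = x⁻¹ := by
  simp only [invEquiv, MonoidHom.toMulEquiv_apply, invHom, lift_x]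

lemma invEquiv_y : invEquiv m k n hmk y = y * z ^ (1 - n) := by
  simp only [invEquiv, MonoidHom.toMulEquiv_apply, invHom, lift_y]

lemma invEquiv_z : invEquiv m k n hmk z = z⁻¹ := by
  simp only [invEquiv, MonoidHom.toMulEquiv_apply, invHom, lift_z]

end invEquiv

end Hmn

/-- `x ↦ x⁻¹`, `y ↦ y z^{1-n}`, `z ↦ z⁻¹` extends to an isomorphism
`H_{m,n} ≅ H_{-m-1,n}`. -/
theorem stmt_4 (m n : ℤ) :
    ∃ φ : Hmn m n ≃* Hmn (-m - 1) n,
      φ (PresentedGroup.of 0) = (PresentedGroup.of 0)⁻¹ ∧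
      φ (PresentedGroup.of 1) =
        PresentedGroup.of 1 * (PresentedGroup.of 2 : Hmn (-m - 1) n) ^ (1 - n) ∧
      φ (PresentedGroup.of 2) = (PresentedGroup.of 2)⁻¹ := by
  have hmk : m + (-m - 1) = -1 := by ring
  exact ⟨Hmn.invEquiv m _ n hmk, Hmn.invEquiv_x m _ n hmk, Hmn.invEquiv_y m _ n hmk,
    Hmn.invEquiv_z m _ n hmk⟩
end

section
/- For any integer n, the group H_{−1,n} = ⟨x,y,z ∣ x = [x^{−1},z^n][y,z]⟩ is isomorphic to the free group on two generators. -/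
/-!
For `m = -1` the defining relation `x = [x⁻¹, zⁿ][y, z] = x z⁻ⁿ x⁻¹ zⁿ [y, z]` is equivalent to
`x = zⁿ [y, z] z⁻ⁿ`, which expresses `x` as a word in `y` and `z`. Eliminating the generator `x`
(a Tietze transformation) leaves `y` and `z` with no relation at all.
-/

theorem map_cmt_s6 {M N F : Type*} [Group M] [Group N] [FunLike F M N] [MonoidHomClass F M N]
    (φ : F) (a b : M) : φ (cmt a b) = cmt (φ a) (φ b) := by
  simp [cmt]

theorem inv_mul_cmt_inv_zpow_mul_cmt_eq_one_iff {G : Type*} [Group G] (x y z : G) (n : ℤ) :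
    x⁻¹ * (cmt (x ^ (-1 : ℤ)) (z ^ n) * cmt y z) = 1 ↔ x = z ^ n * cmt y z * z ^ (-n) := by
  have hconj : x⁻¹ * (cmt (x ^ (-1 : ℤ)) (z ^ n) * cmt y z) =
      z ^ (-n) * (x⁻¹ * (z ^ n * cmt y z * z ^ (-n))) * (z ^ (-n))⁻¹ := by
    simp only [cmt]
    group
  rw [hconj, conj_eq_one_iff, inv_mul_eq_one]

theorem lift_Hrels_neg_one_eq_one_iff {G : Type*} [Group G] (n : ℤ) (f : Fin 3 → G) :
    (∀ r ∈ Hrels (-1) n, FreeGroup.lift f r = 1) ↔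
      f 0 = f 2 ^ n * cmt (f 1) (f 2) * f 2 ^ (-n) := by
  simp only [Hrels, Set.mem_singleton_iff, forall_eq, map_mul, map_inv, map_cmt_s6, map_zpow,
    FreeGroup.lift_apply_of, inv_mul_cmt_inv_zpow_mul_cmt_eq_one_iff]

namespace Hmn

variable (n : ℤ)

theorem of_zero_eq :
    (PresentedGroup.of 0 : Hmn (-1) n) = PresentedGroup.of 2 ^ n *
      cmt (PresentedGroup.of 1) (PresentedGroup.of 2) * PresentedGroup.of 2 ^ (-n) := by
  refine (lift_Hrels_neg_one_eq_one_iff n PresentedGroup.of).mp fun r hr => ?_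
  have hlift : FreeGroup.lift PresentedGroup.of = PresentedGroup.mk (Hrels (-1) n) :=
    FreeGroup.ext_hom _ _ fun _ => rfl
  rw [hlift]
  exact PresentedGroup.one_of_mem hr

def toFree : Hmn (-1) n →* FreeGroup (Fin 2) :=
  PresentedGroup.toGroup (f := ![FreeGroup.of 1 ^ n * cmt (FreeGroup.of 0) (FreeGroup.of 1) *
    FreeGroup.of 1 ^ (-n), FreeGroup.of 0, FreeGroup.of 1])
    ((lift_Hrels_neg_one_eq_one_iff n _).mpr rfl)

def ofFree : FreeGroup (Fin 2) →* Hmn (-1) n :=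
  FreeGroup.lift ![PresentedGroup.of 1, PresentedGroup.of 2]

theorem ofFree_comp_toFree : (ofFree n).comp (toFree n) = MonoidHom.id _ := by
  refine PresentedGroup.ext fun i => ?_
  show ofFree n (PresentedGroup.toGroup _ (PresentedGroup.of i)) = PresentedGroup.of i
  rw [PresentedGroup.toGroup.of]
  fin_cases i
  · show ofFree n (FreeGroup.of 1 ^ n * cmt (FreeGroup.of 0) (FreeGroup.of 1) *
      FreeGroup.of 1 ^ (-n)) = PresentedGroup.of 0
    simp only [ofFree, map_mul, map_zpow, map_cmt_s6, FreeGroup.lift_apply_of]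
    exact (of_zero_eq n).symm
  all_goals rfl

theorem toFree_comp_ofFree : (toFree n).comp (ofFree n) = MonoidHom.id _ := by
  refine FreeGroup.ext_hom _ _ fun i => ?_
  show toFree n (FreeGroup.lift _ (FreeGroup.of i)) = FreeGroup.of i
  fin_cases i <;> rfl

def mulEquivFreeGroup : Hmn (-1) n ≃* FreeGroup (Fin 2) :=
  MonoidHom.toMulEquiv (toFree n) (ofFree n) (ofFree_comp_toFree n) (toFree_comp_ofFree n)

end Hmn

/-- `H_{-1,n}` is isomorphic to the free group on two generators. -/
theorem stmt_6 (n : ℤ) : Nonempty (Hmn (-1) n ≃* FreeGroup (Fin 2)) :=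
  ⟨Hmn.mulEquivFreeGroup n⟩
end

section
/- Let (γ_k) be defined by γ_0=0, γ_1=1, γ_{k+1}=rγ_k − γ_{k−1} for r ∈ ℂ. Then for every integer k: (2 − r) γ_{k+1} γ_k = (1 + γ_k − γ_{k+1})(1 + γ_{k+1} − γ_k). -/
/-!
The quadratic form `γ (k + 1) ^ 2 - r * γ (k + 1) * γ k + γ k ^ 2` is invariant under the
shift `k ↦ k + 1` of a solution of `γ (k + 1) = r * γ k - γ (k - 1)`, so it equals its value
`1` at `k = 0`. Since `(1 + γ k - γ (k + 1)) * (1 + γ (k + 1) - γ k) = 1 - (γ (k + 1) - γ k) ^ 2`,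
the identity is this invariant rearranged.
-/

section ThreeTermRecurrence

variable {R : Type*} [CommRing R] (r : R) (γ : ℤ → R)

def shiftInvariantForm (k : ℤ) : R :=
  γ (k + 1) ^ 2 - r * γ (k + 1) * γ k + γ k ^ 2

variable {r γ}

theorem shiftInvariantForm_succ (hrec : ∀ k : ℤ, γ (k + 1) = r * γ k - γ (k - 1)) (k : ℤ) :
    shiftInvariantForm r γ (k + 1) = shiftInvariantForm r γ k := by
  have hnext : γ (k + 1 + 1) = r * γ (k + 1) - γ k := by
    simpa only [add_sub_cancel_right] using hrec (k + 1)
  unfold shiftInvariantForm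
  rw [hnext]
  ring

theorem shiftInvariantForm_eq_initial (hrec : ∀ k : ℤ, γ (k + 1) = r * γ k - γ (k - 1)) (k : ℤ) :
    shiftInvariantForm r γ k = shiftInvariantForm r γ 0 := by
  induction k using Int.induction_on with
  | zero => rfl
  | succ k ih => rw [shiftInvariantForm_succ hrec, ih]
  | pred k ih => rw [← ih, ← shiftInvariantForm_succ hrec, sub_add_cancel]

end ThreeTermRecurrence

theorem stmt_13 (r : ℂ) (γ : ℤ → ℂ) (h0 : γ 0 = 0) (h1 : γ 1 = 1)
    (hrec : ∀ k : ℤ, γ (k + 1) = r * γ k - γ (k - 1)) :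
    ∀ k : ℤ, (2 - r) * γ (k + 1) * γ k =
      (1 + γ k - γ (k + 1)) * (1 + γ (k + 1) - γ k) := by
  intro k
  have hform : shiftInvariantForm r γ k = 1 := by
    rw [shiftInvariantForm_eq_initial hrec, shiftInvariantForm, zero_add, h0, h1]
    ring
  unfold shiftInvariantForm at hform
  linear_combination hform
end

section
/- Let (γ_k) be defined by γ_0=0, γ_1=1, γ_{k+1}=rγ_k − γ_{k−1}, and similarly (γ'_k) for parameter r'. If for some integer k one has γ_k = γ'_k, γ_{k+1} = γ'_{k+1}, and γ_k γ_{k+1} ≠ 0, then r = r'. -/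
/-!
A sequence with `γ (k + 1) = r * γ k - γ (k - 1)` keeps the quadratic form
`γ (k + 1) ^ 2 + γ k ^ 2 - r * γ k * γ (k + 1)` constant, equal to `1` when `γ 0 = 0` and `γ 1 = 1`.
If `γ` and `γ'` agree at `k` and `k + 1`, subtracting the two invariants gives
`(r - r') * γ k * γ (k + 1) = 0`.
-/

def chebyshevEnergy {R : Type*} [CommRing R] (r : R) (γ : ℤ → R) (k : ℤ) : R :=
  γ (k + 1) ^ 2 + γ k ^ 2 - r * γ k * γ (k + 1)

theorem chebyshevEnergy_sub_one {R : Type*} [CommRing R] {r : R} {γ : ℤ → R}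
    (hrec : ∀ k : ℤ, γ (k + 1) = r * γ k - γ (k - 1)) (k : ℤ) :
    chebyshevEnergy r γ (k - 1) = chebyshevEnergy r γ k := by
  simp only [chebyshevEnergy, sub_add_cancel, hrec k]
  ring

theorem chebyshevEnergy_eq_chebyshevEnergy_zero {R : Type*} [CommRing R] {r : R} {γ : ℤ → R}
    (hrec : ∀ k : ℤ, γ (k + 1) = r * γ k - γ (k - 1)) (k : ℤ) :
    chebyshevEnergy r γ k = chebyshevEnergy r γ 0 := by
  induction k using Int.induction_on with
  | zero => rfl
  | succ n ih => rw [← ih, ← chebyshevEnergy_sub_one hrec, add_sub_cancel_right]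
  | pred n ih => rw [← ih, chebyshevEnergy_sub_one hrec]

theorem stmt_14 (r r' : ℂ) (γ γ' : ℤ → ℂ)
    (h0 : γ 0 = 0) (h1 : γ 1 = 1)
    (hrec : ∀ k : ℤ, γ (k + 1) = r * γ k - γ (k - 1))
    (h0' : γ' 0 = 0) (h1' : γ' 1 = 1)
    (hrec' : ∀ k : ℤ, γ' (k + 1) = r' * γ' k - γ' (k - 1))
    (k : ℤ) (hk : γ k = γ' k) (hk1 : γ (k + 1) = γ' (k + 1))
    (hne : γ k * γ (k + 1) ≠ 0) :
    r = r' := by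
  have hE := chebyshevEnergy_eq_chebyshevEnergy_zero hrec k
  have hE' := chebyshevEnergy_eq_chebyshevEnergy_zero hrec' k
  simp only [chebyshevEnergy, zero_add, h0, h1, h0', h1', hk, hk1] at hE hE' hne
  have hmul : (r - r') * (γ' k * γ' (k + 1)) = 0 := by linear_combination hE' - hE
  exact sub_eq_zero.mp ((mul_eq_zero.mp hmul).resolve_right hne)
end

section
/- Let m ≥ 1 be an integer, λ ∈ ℂ with λ ≠ 1, λ^n ≠ 1, λ^{n+1} ≠ 1, and set ϑ_k = λ^k − 1. Define h_λ(r) = γ_{m+1}(r) + γ_m(r) + ϑ_{2n+1}/(ϑ_{n+1} ϑ_n), where γ_k(r) are the Chebyshev-type polynomials in r with γ_0=0, γ_1=1, γ_{k+1}=rγ_k − γ_{k−1}. Then h_λ, as a polynomial in r of degree m, has no triple root. -/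
/-!
With `S` the rescaled Chebyshev polynomials of Mathlib (`S_{k+1} = X S_k - S_{k-1}`, `S_0 = 1`,
`S_{-1} = 0`) one has `γ_k = S_{k-1}`, so `h` differs by a constant from `W = S_m + S_{m-1}`,
which satisfies the Chebyshev-type equation `(4 - r²) W'' = 2 (r + 1) W' - m (m + 1) W`.
At a common root of `W'` and `W''` this equation forces `W = 0`, so `W` would have a multiple
root. But a nonzero solution of a second-order linear equation has only simple roots where the
leading coefficient `4 - r²` does not vanish, and `W(2) = 2m + 1`, `W(-2) = ±1` are not zero.
-/

open Polynomial

namespace Polynomial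

theorem derivative_X_sub_C_pow_succ_mul {R : Type*} [CommRing R] (r : R) (j : ℕ) (q : R[X]) :
    derivative ((X - C r) ^ (j + 1) * q) =
      (X - C r) ^ j * (((j + 1 : ℕ) : R[X]) * q + (X - C r) * derivative q) := by
  rw [derivative_mul, derivative_X_sub_C_pow, Nat.add_sub_cancel, map_natCast]
  ring

theorem rootMultiplicity_le_one_of_mul_derivative_derivative_eq {R : Type*} [CommRing R]
    [IsDomain R] [CharZero R] {p Q P₁ P₀ : R[X]} {r : R} (hp : p ≠ 0)
    (hode : Q * derivative (derivative p) = P₁ * derivative p + P₀ * p) (hQ : Q.eval r ≠ 0) :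
    p.rootMultiplicity r ≤ 1 := by
  by_contra! hk
  obtain ⟨j, hj⟩ : ∃ j, p.rootMultiplicity r = j + 2 := ⟨_, (Nat.sub_add_cancel hk).symm⟩
  set w := X - C r
  set q := p /ₘ w ^ p.rootMultiplicity r
  have hq : q.eval r ≠ 0 := eval_divByMonic_pow_rootMultiplicity_ne_zero r hp
  have hpq : p = w ^ (j + 2) * q := by
    rw [← hj]
    exact (pow_mul_divByMonic_rootMultiplicity_eq p r).symm
  set M := ((j + 2 : ℕ) : R[X]) * q + w * derivative q
  have hp' : derivative p = w ^ (j + 1) * M := by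
    rw [hpq, derivative_X_sub_C_pow_succ_mul]
  have hp'' :
      derivative (derivative p) = w ^ j * (((j + 1 : ℕ) : R[X]) * M + w * derivative M) := by
    rw [hp', derivative_X_sub_C_pow_succ_mul]
  -- Cancelling `w ^ j` and evaluating at `r` leaves `Q(r) (j + 1) (j + 2) q(r) = 0`.
  have key : w ^ j * (Q * (((j + 1 : ℕ) : R[X]) * M + w * derivative M) -
      w * (P₁ * M + P₀ * w * q)) = 0 := by
    rw [hp'', hp', hpq] at hode
    linear_combination hode
  have := congrArg (eval r)
    ((mul_eq_zero.mp key).resolve_left (pow_ne_zero j (X_sub_C_ne_zero r)))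
  simp only [eval_sub, eval_mul, eval_add, eval_natCast, w, M, eval_X, eval_C, sub_self,
    zero_mul, mul_zero, add_zero, sub_zero, eval_zero, mul_eq_zero] at this
  rcases this with h | h | h | h
  exacts [hQ h, by norm_cast at h, by norm_cast at h, hq h]

end Polynomial

namespace Polynomial.Chebyshev

variable (R : Type*) [CommRing R]

theorem two_sub_X_mul_derivative_S_add_S_sub_one (n : ℤ) :
    (2 - X) * derivative (S R n + S R (n - 1)) =
      ((n : R[X]) + 1) * S R (n - 1) - (n : R[X]) * S R n := by
  induction n using Polynomial.Chebyshev.induct with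
  | zero => simp
  | one => simp; ring
  | add_two n ih1 ih0 =>
    have h₂ := S_add_two R n
    have h₁ := S_add_one R n
    have d₂ := congrArg derivative h₂
    have d₁ := congrArg derivative h₁
    simp only [derivative_sub, derivative_mul, derivative_X, one_mul] at d₂ d₁
    rw [show (n : ℤ) + 2 - 1 = n + 1 by ring]
    rw [show (n : ℤ) + 1 - 1 = n by ring] at ih1
    simp only [derivative_add] at ih1 ih0 ⊢
    push_cast at ih1 ih0 ⊢
    linear_combination (2 - X) * (d₂ + d₁) + X * ih1 - ih0 + ((n : R[X]) + 2) * h₂ -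
      ((n : R[X]) + 1) * h₁
  | neg_add_one n ih1 ih0 =>
    have h₂ := S_sub_two R (-n)
    have h₁ := S_sub_one R (-n)
    have d₂ := congrArg derivative h₂
    have d₁ := congrArg derivative h₁
    simp only [derivative_sub, derivative_mul, derivative_X, one_mul] at d₂ d₁
    rw [show -(n : ℤ) - 1 - 1 = -n - 2 by ring]
    rw [show -(n : ℤ) + 1 - 1 = -n by ring] at ih0
    simp only [derivative_add] at ih1 ih0 ⊢
    push_cast at ih1 ih0 ⊢
    linear_combination (2 - X) * (d₂ + d₁) + X * ih1 - ih0 + (n : R[X]) * h₂ -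
      ((n : R[X]) - 1) * h₁

theorem four_sub_X_sq_mul_derivative_S (n : ℤ) :
    (4 - X ^ 2) * derivative (S R n) =
      (2 * (n : R[X]) + 2) * S R (n - 1) - (n : R[X]) * X * S R n := by
  induction n using Polynomial.Chebyshev.induct with
  | zero => simp
  | one => simp; ring
  | add_two n ih1 ih0 =>
    have h₂ := S_add_two R n
    have h₁ := S_add_one R n
    rw [show (n : ℤ) + 2 - 1 = n + 1 by ring, h₂]
    rw [show (n : ℤ) + 1 - 1 = n by ring] at ih1
    simp only [derivative_sub, derivative_mul, derivative_X, one_mul]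
    push_cast at ih1 ih0 ⊢
    linear_combination X * ih1 - ih0 - (2 * (n : R[X]) + 2) * h₁
  | neg_add_one n ih1 ih0 =>
    have h₂ := S_sub_two R (-n)
    have h₁ := S_sub_one R (-n)
    rw [show -(n : ℤ) - 1 - 1 = -n - 2 by ring, h₁]
    rw [show -(n : ℤ) + 1 - 1 = -n by ring] at ih0
    simp only [derivative_sub, derivative_mul, derivative_X, one_mul]
    push_cast at ih1 ih0 ⊢
    linear_combination X * ih1 - ih0 + 2 * (n : R[X]) * h₂ + 2 * X * h₁

theorem four_sub_X_sq_mul_derivative_derivative_S_add_S_sub_one (n : ℤ) :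
    (4 - X ^ 2) * derivative (derivative (S R n + S R (n - 1))) =
      2 * (X + 1) * derivative (S R n + S R (n - 1)) -
        (n : R[X]) * ((n : R[X]) + 1) * (S R n + S R (n - 1)) := by
  have hW := two_sub_X_mul_derivative_S_add_S_sub_one R n
  have hW' := congrArg derivative hW
  have hS := four_sub_X_sq_mul_derivative_S R n
  have hS₁ := four_sub_X_sq_mul_derivative_S R (n - 1)
  have hrec := S_sub_two R n
  rw [show n - 1 - 1 = n - 2 by ring] at hS₁
  simp only [derivative_mul, derivative_sub, derivative_X, derivative_ofNat, derivative_intCast,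
    derivative_add, derivative_one, zero_mul, zero_add, add_zero, zero_sub] at hW'
  simp only [derivative_add] at hW hS hS₁ ⊢
  -- `X - 2` is monic, so it can be cancelled; after multiplying by it, the derivatives of
  -- `S R n` and `S R (n - 1)` are eliminated by `four_sub_X_sq_mul_derivative_S`.
  apply (monic_X_sub_C (2 : R)).isRegular.left
  simp only [map_ofNat]
  push_cast at hS₁ ⊢
  linear_combination (X - 2) * (2 + X) * hW' + X * hW - ((n : R[X]) + 1) * hS₁ + (n : R[X]) * hS
    - 2 * (n : R[X]) * ((n : R[X]) + 1) * hrec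

variable {R}

theorem eq_S_sub_one_of_recurrence (γ : ℤ → R[X]) (h0 : γ 0 = 0) (h1 : γ 1 = 1)
    (hrec : ∀ k : ℤ, γ (k + 1) = X * γ k - γ (k - 1)) (k : ℤ) : γ k = S R (k - 1) := by
  induction k using Polynomial.Chebyshev.induct with
  | zero => simp [h0]
  | one => simp [h1]
  | add_two n ih1 ih0 =>
    rw [show (n : ℤ) + 2 = n + 1 + 1 by ring, hrec, ih1, add_sub_cancel_right, ih0, ← S_add_one]
    ring_nf
  | neg_add_one n ih1 ih0 =>
    have h := hrec (-n)
    rw [ih1, ih0, show -(n : ℤ) + 1 - 1 = -n by ring] at h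
    rw [show -(n : ℤ) - 1 - 1 = -n - 2 by ring]
    linear_combination h - S_sub_two R (-n)

theorem eval_two_S_add_S_sub_one (n : ℤ) : (S R n + S R (n - 1)).eval 2 = 2 * n + 1 := by
  simp only [eval_add, S_eval_two, Int.cast_sub, Int.cast_one]
  ring

theorem eval_neg_two_S_add_S_sub_one (n : ℤ) :
    (S R n + S R (n - 1)).eval (-2) = n.negOnePow := by
  simp only [eval_add, S_eval_neg_two, Int.negOnePow_sub, Int.negOnePow_one, Units.val_mul,
    Units.val_neg, Units.val_one, Int.cast_sub, Int.cast_one, Int.cast_neg, Int.cast_mul]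
  ring

variable [CharZero R]

theorem eval_two_S_add_S_sub_one_ne_zero (n : ℤ) : (S R n + S R (n - 1)).eval 2 ≠ 0 := by
  rw [eval_two_S_add_S_sub_one]
  exact_mod_cast (by omega : 2 * n + 1 ≠ 0)

theorem S_add_S_sub_one_ne_zero (n : ℤ) : S R n + S R (n - 1) ≠ 0 :=
  fun h ↦ eval_two_S_add_S_sub_one_ne_zero n (by rw [h, eval_zero])

variable [IsDomain R]

theorem rootMultiplicity_S_add_S_sub_one_le_one (n : ℤ) (r : R) :
    (S R n + S R (n - 1)).rootMultiplicity r ≤ 1 := by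
  by_cases hr : r = 2 ∨ r = -2
  · suffices ¬(S R n + S R (n - 1)).IsRoot r by
      rw [rootMultiplicity_eq_zero this]
      exact zero_le_one
    rcases hr with rfl | rfl
    · exact eval_two_S_add_S_sub_one_ne_zero n
    · rw [IsRoot.def, eval_neg_two_S_add_S_sub_one]
      exact Int.cast_ne_zero.mpr (Units.ne_zero _)
  · have hode : (4 - X ^ 2) * derivative (derivative (S R n + S R (n - 1))) =
        2 * (X + 1) * derivative (S R n + S R (n - 1)) +
          -((n : R[X]) * ((n : R[X]) + 1)) * (S R n + S R (n - 1)) := by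
      rw [four_sub_X_sq_mul_derivative_derivative_S_add_S_sub_one]
      ring
    refine rootMultiplicity_le_one_of_mul_derivative_derivative_eq
      (S_add_S_sub_one_ne_zero n) hode ?_
    obtain ⟨hr₂, hr'⟩ := not_or.mp hr
    rw [eval_sub, eval_pow, eval_X, eval_ofNat, show (4 : R) - r ^ 2 = (2 - r) * (2 + r) by ring]
    exact mul_ne_zero (sub_ne_zero.mpr (Ne.symm hr₂))
      fun h ↦ hr' (eq_neg_of_add_eq_zero_right h)

theorem not_isRoot_derivative_and_derivative_derivative_S_add_S_sub_one {n : ℤ} (hn₀ : n ≠ 0)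
    (hn₁ : n ≠ -1) (r : R) :
    ¬((S R n + S R (n - 1)).derivative.IsRoot r ∧
      (S R n + S R (n - 1)).derivative.derivative.IsRoot r) := by
  rintro ⟨h₁, h₂⟩
  have hode :=
    congrArg (eval r) (four_sub_X_sq_mul_derivative_derivative_S_add_S_sub_one R n)
  simp only [eval_mul, eval_sub, eval_add, eval_intCast, eval_one, h₁.eq_zero, h₂.eq_zero]
    at hode
  have h₀ : (S R n + S R (n - 1)).IsRoot r := by
    have hn : (n : R) * (n + 1) ≠ 0 :=
      mul_ne_zero (Int.cast_ne_zero.mpr hn₀) (by exact_mod_cast (by omega : n + 1 ≠ 0))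
    simpa [hn] using hode
  have := rootMultiplicity_S_add_S_sub_one_le_one n r
  rw [← not_lt, one_lt_rootMultiplicity_iff_isRoot (S_add_S_sub_one_ne_zero n)] at this
  exact this ⟨h₀, h₁⟩

end Polynomial.Chebyshev

theorem stmt_15_general (m n : ℕ) (hm : 1 ≤ m) (l : ℂ)
    (γ : ℤ → Polynomial ℂ) (h0 : γ 0 = 0) (h1 : γ 1 = 1)
    (hrec : ∀ k : ℤ, γ (k + 1) = Polynomial.X * γ k - γ (k - 1))
    (h : Polynomial ℂ)
    (hh : h = γ (m + 1) + γ m +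
      Polynomial.C ((l ^ (2 * n + 1) - 1) / ((l ^ (n + 1) - 1) * (l ^ n - 1)))) :
    ¬ ∃ r : ℂ, h.eval r = 0 ∧ h.derivative.eval r = 0 ∧
      h.derivative.derivative.eval r = 0 := by
  rintro ⟨r, -, hr₁, hr₂⟩
  have hγ := Chebyshev.eq_S_sub_one_of_recurrence γ h0 h1 hrec
  rw [hh, hγ, hγ, add_sub_cancel_right, derivative_add, derivative_C, add_zero] at hr₁ hr₂
  exact Chebyshev.not_isRoot_derivative_and_derivative_derivative_S_add_S_sub_one
    (n := m) (by omega) (by omega) r ⟨hr₁, hr₂⟩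

/-- For `m, n ≥ 1` and `λ` with `λ ≠ 1`, `λ^n ≠ 1`, `λ^{n+1} ≠ 1`, the polynomial
`h_λ(r) = γ_{m+1}(r) + γ_m(r) + ϑ_{2n+1}/(ϑ_{n+1} ϑ_n)` (with `ϑ_k = λ^k − 1` and
`γ_k` the Chebyshev-type polynomials) has no triple root. -/
theorem stmt_15 (m n : ℕ) (hm : 1 ≤ m) (hn : 1 ≤ n) (l : ℂ)
    (hl1 : l ≠ 1) (hln : l ^ n ≠ 1) (hln1 : l ^ (n + 1) ≠ 1)
    (γ : ℤ → Polynomial ℂ) (h0 : γ 0 = 0) (h1 : γ 1 = 1)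
    (hrec : ∀ k : ℤ, γ (k + 1) = Polynomial.X * γ k - γ (k - 1))
    (h : Polynomial ℂ)
    (hh : h = γ (m + 1) + γ m +
      Polynomial.C ((l ^ (2 * n + 1) - 1) / ((l ^ (n + 1) - 1) * (l ^ n - 1)))) :
    ¬ ∃ r : ℂ, h.eval r = 0 ∧ h.derivative.eval r = 0 ∧
      h.derivative.derivative.eval r = 0 :=
  stmt_15_general m n hm l γ h0 h1 hrec h hh
end

section
/- With h_λ(r) = γ_{m+1}(r) + γ_m(r) + c (c a constant, m ≥ 1), if r is a double root of h_λ (i.e., h_λ(r) = h_λ'(r) = 0), then r ≠ 2, r ≠ −2, and m γ_{m+1}(r) = (m+1) γ_m(r); moreover γ_{m+1}(r) γ_m(r) ≠ 0. -/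
open Polynomial

lemma aux_rec (γ : ℤ → Polynomial ℂ)
    (hrec : ∀ k : ℤ, γ (k + 1) = Polynomial.X * γ k - γ (k - 1))
    (k : ℤ) (x : ℂ) :
    (γ (k+1)).eval x = x * (γ k).eval x - (γ (k-1)).eval x := by
  rw [hrec]; simp

lemma aux_der (γ : ℤ → Polynomial ℂ)
    (hrec : ∀ k : ℤ, γ (k + 1) = Polynomial.X * γ k - γ (k - 1))
    (k : ℤ) (x : ℂ) :
    (derivative (γ (k+1))).eval x
      = (γ k).eval x + x * (derivative (γ k)).eval x - (derivative (γ (k-1))).eval x := by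
  rw [hrec]
  simp only [derivative_sub, derivative_mul, derivative_X, eval_sub, eval_add, eval_mul,
    eval_X, one_mul]

lemma aux_val2 (γ : ℤ → Polynomial ℂ) (h0 : γ 0 = 0) (h1 : γ 1 = 1)
    (hrec : ∀ k : ℤ, γ (k + 1) = Polynomial.X * γ k - γ (k - 1)) (n : ℕ) :
    (γ (n:ℤ)).eval 2 = (n:ℂ) ∧ (γ ((n:ℤ)+1)).eval 2 = (n:ℂ)+1 ∧
    6 * (derivative (γ (n:ℤ))).eval 2 = (n:ℂ)^3 - n ∧
    6 * (derivative (γ ((n:ℤ)+1))).eval 2 = ((n:ℂ)+1)^3 - ((n:ℂ)+1) := by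
  induction n with
  | zero => simp [h0, h1]
  | succ n ih =>
    obtain ⟨e1, e2, d1, d2⟩ := ih
    have key := aux_rec γ hrec ((n:ℤ)+1) 2
    have keyd := aux_der γ hrec ((n:ℤ)+1) 2
    have eidx : ((n:ℤ)+1)-1 = (n:ℤ) := by ring
    rw [eidx] at key keyd
    push_cast
    refine ⟨e2, ?_, d2, ?_⟩
    · rw [key]; linear_combination 2*e2 - e1
    · rw [keyd]; linear_combination 6*e2 + 2*d2 - d1

lemma aux_valm2 (γ : ℤ → Polynomial ℂ) (h0 : γ 0 = 0) (h1 : γ 1 = 1)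
    (hrec : ∀ k : ℤ, γ (k + 1) = Polynomial.X * γ k - γ (k - 1)) (n : ℕ) :
    (γ (n:ℤ)).eval (-2) = -((-1:ℂ)^n) * n ∧
    (γ ((n:ℤ)+1)).eval (-2) = (-1:ℂ)^n * ((n:ℂ)+1) ∧
    6 * (derivative (γ (n:ℤ))).eval (-2) = (-1:ℂ)^n * ((n:ℂ)^3 - n) ∧
    6 * (derivative (γ ((n:ℤ)+1))).eval (-2)
      = -((-1:ℂ)^n) * (((n:ℂ)+1)^3 - ((n:ℂ)+1)) := by
  induction n with
  | zero => simp [h0, h1]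
  | succ n ih =>
    obtain ⟨e1, e2, d1, d2⟩ := ih
    have key := aux_rec γ hrec ((n:ℤ)+1) (-2)
    have keyd := aux_der γ hrec ((n:ℤ)+1) (-2)
    have eidx : ((n:ℤ)+1)-1 = (n:ℤ) := by ring
    rw [eidx] at key keyd
    push_cast
    simp only [pow_succ]
    refine ⟨?_, ?_, ?_, ?_⟩
    · linear_combination e2
    · rw [key]; linear_combination (-2)*e2 - e1
    · linear_combination d2
    · rw [keyd]; linear_combination 6*e2 - 2*d2 - d1

lemma aux_key (γ : ℤ → Polynomial ℂ) (h0 : γ 0 = 0) (h1 : γ 1 = 1)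
    (hrec : ∀ k : ℤ, γ (k + 1) = Polynomial.X * γ k - γ (k - 1)) (r : ℂ) (n : ℕ) :
    ((r^2-4) * (derivative (γ (n:ℤ))).eval r
      = (n:ℂ) * ((γ ((n:ℤ)+1)).eval r - (γ ((n:ℤ)-1)).eval r) - r * (γ (n:ℤ)).eval r) ∧
    ((r^2-4) * (derivative (γ ((n:ℤ)+1))).eval r
      = ((n:ℂ)+1) * ((γ ((n:ℤ)+1+1)).eval r - (γ (n:ℤ)).eval r)
        - r * (γ ((n:ℤ)+1)).eval r) := by
  induction n with
  | zero =>
    have key := aux_rec γ hrec 1 r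
    constructor
    · simp [h0]
    · norm_num at key ⊢
      simp only [h0, h1, eval_zero, eval_one, derivative_one, mul_zero, mul_one] at key ⊢
      rw [key]; ring
  | succ n ih =>
    obtain ⟨I1, I2⟩ := ih
    have E1 := aux_rec γ hrec (n:ℤ) r
    have E3 := aux_rec γ hrec ((n:ℤ)+1+1) r
    have HD := aux_der γ hrec ((n:ℤ)+1) r
    have eidx : ((n:ℤ)+1)-1 = (n:ℤ) := by ring
    have eidx2 : ((n:ℤ)+1+1)-1 = (n:ℤ)+1 := by ring
    rw [eidx] at HD
    rw [eidx2] at E3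
    push_cast
    constructor
    · rw [eidx]
      exact I2
    · linear_combination (r^2-4)*HD + r*I2 - I1 + (n:ℂ)*E1 - ((n:ℂ)+2)*E3

/-- If `r` is a double root of `h(r) = γ_{m+1}(r) + γ_m(r) + c` (with `m ≥ 1`),
then `r ≠ ±2`, `m γ_{m+1}(r) = (m+1) γ_m(r)`, and `γ_{m+1}(r) γ_m(r) ≠ 0`. -/
theorem stmt_16 (m : ℕ) (hm : 1 ≤ m) (c : ℂ)
    (γ : ℤ → Polynomial ℂ) (h0 : γ 0 = 0) (h1 : γ 1 = 1)
    (hrec : ∀ k : ℤ, γ (k + 1) = Polynomial.X * γ k - γ (k - 1))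
    (h : Polynomial ℂ) (hh : h = γ (m + 1) + γ m + Polynomial.C c)
    (r : ℂ) (hr : h.eval r = 0) (hr' : h.derivative.eval r = 0) :
    r ≠ 2 ∧ r ≠ -2 ∧
      (m : ℂ) * (γ (m + 1)).eval r = ((m : ℂ) + 1) * (γ m).eval r ∧
      (γ (m + 1)).eval r * (γ m).eval r ≠ 0 := by
  have hm0 : (m:ℂ) ≠ 0 := Nat.cast_ne_zero.mpr (by omega)
  have hm1 : (m:ℂ) + 1 ≠ 0 := by
    have : ((m+1:ℕ):ℂ) ≠ 0 := Nat.cast_ne_zero.mpr (by omega)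
    push_cast at this; exact this
  have S : (derivative (γ ((m:ℤ)+1))).eval r + (derivative (γ (m:ℤ))).eval r = 0 := by
    have hS := hr'
    rw [hh] at hS
    simpa using hS
  have hr2 : r ≠ 2 := by
    rintro rfl
    obtain ⟨e1, e2, d1, d2⟩ := aux_val2 γ h0 h1 hrec m
    have hz : (m:ℂ) * ((m:ℂ)+1) * (2*(m:ℂ)+1) = 0 := by
      linear_combination 6*S - d2 - d1
    have hm2 : (2*(m:ℂ)+1) ≠ 0 := by
      have : ((2*m+1:ℕ):ℂ) ≠ 0 := Nat.cast_ne_zero.mpr (by omega)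
      push_cast at this; exact this
    rcases mul_eq_zero.mp hz with h' | h'
    · rcases mul_eq_zero.mp h' with h'' | h''
      · exact hm0 h''
      · exact hm1 h''
    · exact hm2 h'
  have hrm2 : r ≠ -2 := by
    rintro rfl
    obtain ⟨e1, e2, d1, d2⟩ := aux_valm2 γ h0 h1 hrec m
    have hs : ((-1:ℂ)^m) ≠ 0 := pow_ne_zero _ (by norm_num)
    have hz : (-1:ℂ)^m * (3*(m:ℂ)^2 + 3*(m:ℂ)) = 0 := by
      linear_combination d1 + d2 - 6*S
    have h3 : (3*(m:ℂ)^2 + 3*(m:ℂ)) ≠ 0 := by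
      have : ((3*m^2+3*m:ℕ):ℂ) ≠ 0 := Nat.cast_ne_zero.mpr (by positivity)
      push_cast at this; exact this
    rcases mul_eq_zero.mp hz with h' | h'
    · exact hs h'
    · exact h3 h'
  obtain ⟨K1, K2⟩ := aux_key γ h0 h1 hrec r m
  have Ea := aux_rec γ hrec (m:ℤ) r
  have Eb := aux_rec γ hrec ((m:ℤ)+1) r
  have eidx : ((m:ℤ)+1)-1 = (m:ℤ) := by ring
  rw [eidx] at Eb
  have main : (r+2) * ((m:ℂ) * (γ ((m:ℤ)+1)).eval r - ((m:ℂ)+1) * (γ (m:ℤ)).eval r) = 0 := by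
    linear_combination (r^2-4)*S - K1 - K2 + (m:ℂ)*Ea - ((m:ℂ)+1)*Eb
  have hrp2 : r + 2 ≠ 0 := by
    intro hc
    exact hrm2 (by linear_combination hc)
  have main' : (m:ℂ) * (γ ((m:ℤ)+1)).eval r = ((m:ℂ)+1) * (γ (m:ℤ)).eval r := by
    rcases mul_eq_zero.mp main with h' | h'
    · exact absurd h' hrp2
    · exact sub_eq_zero.mp h'
  refine ⟨hr2, hrm2, main', ?_⟩
  intro hz
  have hab : (γ ((m:ℤ)+1)).eval r = 0 ∧ (γ (m:ℤ)).eval r = 0 := by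
    rcases mul_eq_zero.mp hz with h' | h'
    · refine ⟨h', ?_⟩
      have hb : ((m:ℂ)+1) * (γ (m:ℤ)).eval r = 0 := by
        rw [← main', h', mul_zero]
      exact (mul_eq_zero.mp hb).resolve_left hm1
    · refine ⟨?_, h'⟩
      have ha : (m:ℂ) * (γ ((m:ℤ)+1)).eval r = 0 := by
        rw [main', h', mul_zero]
      exact (mul_eq_zero.mp ha).resolve_left hm0
  have claim : ∀ k : ℕ, k ≤ m →
      (γ ((m:ℤ)+1-k)).eval r = 0 ∧ (γ ((m:ℤ)-k)).eval r = 0 := by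
    intro k
    induction k with
    | zero => intro _; simpa using hab
    | succ k ih =>
      intro hk
      obtain ⟨p1, p2⟩ := ih (by omega)
      have E := aux_rec γ hrec ((m:ℤ)-k) r
      have e1' : ((m:ℤ)-k)+1 = (m:ℤ)+1-k := by ring
      rw [e1'] at E
      constructor
      · have e2' : (m:ℤ)+1-((k+1:ℕ):ℤ) = (m:ℤ)-k := by push_cast; ring
        rw [e2']; exact p2
      · have e3' : (m:ℤ)-((k+1:ℕ):ℤ) = ((m:ℤ)-k)-1 := by push_cast; ring
        rw [e3']
        linear_combination E - p1 + r*p2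
  have hone := (claim m le_rfl).1
  have e4 : (m:ℤ)+1-(m:ℤ) = 1 := by ring
  rw [e4, h1] at hone
  simp at hone
end

section
/- Let Z = diag(λ, ζ) with ζ^n = 1 ≠ λ^n, and suppose W ∈ GL(2,ℂ) with det(W) = λ^m ζ^m, W = [[a, b],[c, d]]. Then there exists Y ∈ GL(2,ℂ) with Z^n W^{-1} Z^{-m} W^2 = Y^{-1} Z^n Y if and only if tr(Z^n W^{-1} Z^{-m} W^2) = tr(Z^n), which is equivalent to the equation (λ^n−1)(λ^{−m}−ζ^{−m})(a+d)ad + (λ^m(λ^n−1)+ζ^m)a + (λ^{n+m} − (λ^n−1)ζ^m)d = (λ^n+1)λ^m ζ^m. -/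
open Matrix

lemma diag_inv22 (x y : ℂ) (hx : x ≠ 0) (hy : y ≠ 0) :
    (!![x, 0; 0, y] : Matrix (Fin 2) (Fin 2) ℂ)⁻¹ = !![x⁻¹, 0; 0, y⁻¹] := by
  apply Matrix.inv_eq_right_inv
  ext i j
  fin_cases i <;> fin_cases j <;>
    simp [Matrix.mul_apply, Fin.sum_univ_two, mul_inv_cancel₀, hx, hy]

lemma diag_pow22 (x y : ℂ) (k : ℕ) :
    (!![x, 0; 0, y] : Matrix (Fin 2) (Fin 2) ℂ) ^ k = !![x ^ k, 0; 0, y ^ k] := by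
  induction k with
  | zero => simp [Matrix.one_fin_two]
  | succ k ih =>
    rw [pow_succ, pow_succ, pow_succ, ih]
    ext i j
    fin_cases i <;> fin_cases j <;> simp [Matrix.mul_apply, Fin.sum_univ_two]

lemma diag_zpow22 (x y : ℂ) (hx : x ≠ 0) (hy : y ≠ 0) (k : ℤ) :
    (!![x, 0; 0, y] : Matrix (Fin 2) (Fin 2) ℂ) ^ k = !![x ^ k, 0; 0, y ^ k] := by
  cases k with
  | ofNat k => simpa using diag_pow22 x y k
  | negSucc k =>
    rw [zpow_negSucc, zpow_negSucc, zpow_negSucc, diag_pow22,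
      diag_inv22 _ _ (pow_ne_zero _ hx) (pow_ne_zero _ hy)]

lemma diag_zpow_coe (x y : ℂ) (hx : x ≠ 0) (hy : y ≠ 0) (u : GL (Fin 2) ℂ)
    (hu : (u : Matrix (Fin 2) (Fin 2) ℂ) = !![x, 0; 0, y]) (k : ℤ) :
    ((u ^ k : GL (Fin 2) ℂ) : Matrix (Fin 2) (Fin 2) ℂ) = !![x ^ k, 0; 0, y ^ k] := by
  rw [Matrix.coe_units_zpow, hu, diag_zpow22 x y hx hy]

lemma conj_diag (μ p q r s : ℂ) (hμ0 : μ ≠ 0) (hμ1 : μ ≠ 1)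
    (htr : p + s = μ + 1) (hdet : p * s - q * r = μ) :
    ∃ Y : GL (Fin 2) ℂ,
      (!![p, q; r, s] : Matrix (Fin 2) (Fin 2) ℂ) =
        (Y⁻¹ : GL (Fin 2) ℂ) * !![μ, 0; 0, 1] * (Y : GL (Fin 2) ℂ) := by
  have mk : ∀ P : Matrix (Fin 2) (Fin 2) ℂ, IsUnit P.det →
      (!![p, q; r, s] : Matrix (Fin 2) (Fin 2) ℂ) * P = P * !![μ, 0; 0, 1] →
      ∃ Y : GL (Fin 2) ℂ,
        (!![p, q; r, s] : Matrix (Fin 2) (Fin 2) ℂ) =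
          (Y⁻¹ : GL (Fin 2) ℂ) * !![μ, 0; 0, 1] * (Y : GL (Fin 2) ℂ) := by
    intro P hP hAP
    refine ⟨⟨P⁻¹, P, Matrix.nonsing_inv_mul P hP, Matrix.mul_nonsing_inv P hP⟩, ?_⟩
    show (!![p, q; r, s] : Matrix (Fin 2) (Fin 2) ℂ) = P * !![μ, 0; 0, 1] * P⁻¹
    rw [← hAP, Matrix.mul_nonsing_inv_cancel_right _ _ hP]
  by_cases hq : q ≠ 0
  · apply mk !![q, q; μ - p, 1 - p]
    · rw [Matrix.det_fin_two_of]
      have : q * (1 - p) - q * (μ - p) = q * (1 - μ) := by ring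
      rw [this]
      exact IsUnit.mk0 _ (mul_ne_zero hq (sub_ne_zero.mpr fun h => hμ1 h.symm))
    · ext i j
      fin_cases i <;> fin_cases j <;>
        simp [Matrix.mul_apply, Fin.sum_univ_two]
      · ring
      · ring
      · linear_combination -hdet + μ * htr
      · linear_combination -hdet + htr
  · push_neg at hq
    by_cases hr : r ≠ 0
    · apply mk !![p - 1, p - μ; r, r]
      · rw [Matrix.det_fin_two_of]
        have : (p - 1) * r - (p - μ) * r = r * (μ - 1) := by ring
        rw [this]
        exact IsUnit.mk0 _ (mul_ne_zero hr (sub_ne_zero.mpr hμ1))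
      · ext i j
        fin_cases i <;> fin_cases j <;>
          simp [Matrix.mul_apply, Fin.sum_univ_two]
        · linear_combination -hdet + p * htr
        · linear_combination -hdet + p * htr
        · linear_combination r * htr
        · linear_combination r * htr
    · push_neg at hr
      subst hq hr
      have hps : (p - μ) * (p - 1) = 0 := by linear_combination -hdet + p * htr
      rcases mul_eq_zero.mp hps with h | h
      · have hp : p = μ := sub_eq_zero.mp h
        have hs : s = 1 := by linear_combination htr - hp
        subst hp hs
        exact ⟨1, by simp⟩
      · have hp : p = 1 := sub_eq_zero.mp h
        have hs : s = μ := by linear_combination htr - hp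
        subst hp
        rw [← hs]
        have hS : (!![0, 1; 1, 0] : Matrix (Fin 2) (Fin 2) ℂ) * !![0, 1; 1, 0] = 1 := by
          ext i j
          fin_cases i <;> fin_cases j <;> simp [Matrix.mul_apply, Fin.sum_univ_two]
        refine ⟨⟨!![0, 1; 1, 0], !![0, 1; 1, 0], hS, hS⟩, ?_⟩
        show (!![1, 0; 0, s] : Matrix (Fin 2) (Fin 2) ℂ) =
          !![0, 1; 1, 0] * !![s, 0; 0, 1] * !![0, 1; 1, 0]
        ext i j
        fin_cases i <;> fin_cases j <;> simp [Matrix.mul_apply, Fin.sum_univ_two]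

/-- For `Z = diag(λ, ζ)` with `ζ^n = 1 ≠ λ^n` and `W` with `det W = λ^m ζ^m`,
there exists `Y ∈ GL(2,ℂ)` with `Z^n W⁻¹ Z^{-m} W² = Y⁻¹ Z^n Y` iff the traces
of both sides agree, iff the explicit polynomial equation in the entries of `W`
holds. -/
theorem stmt_18 (m n : ℤ) (hm : m ≠ 0) (hn : 0 < n)
    (lam zeta : ℂ) (hlam : lam ≠ 0) (hzeta : zeta ≠ 0)
    (hz : zeta ^ n = 1) (hl : lam ^ n ≠ 1)
    (Z W : GL (Fin 2) ℂ)
    (a b c d : ℂ)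
    (hZ : (Z : Matrix (Fin 2) (Fin 2) ℂ) = !![lam, 0; 0, zeta])
    (hW : (W : Matrix (Fin 2) (Fin 2) ℂ) = !![a, b; c, d])
    (hdet : Matrix.det (W : Matrix (Fin 2) (Fin 2) ℂ) = lam ^ m * zeta ^ m) :
    ((∃ Y : GL (Fin 2) ℂ, Z ^ n * W⁻¹ * Z ^ (-m) * W ^ 2 = Y⁻¹ * Z ^ n * Y) ↔
      Matrix.trace ((Z ^ n * W⁻¹ * Z ^ (-m) * W ^ 2 : GL (Fin 2) ℂ) :
          Matrix (Fin 2) (Fin 2) ℂ) =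
        Matrix.trace ((Z ^ n : GL (Fin 2) ℂ) : Matrix (Fin 2) (Fin 2) ℂ)) ∧
    (Matrix.trace ((Z ^ n * W⁻¹ * Z ^ (-m) * W ^ 2 : GL (Fin 2) ℂ) :
          Matrix (Fin 2) (Fin 2) ℂ) =
        Matrix.trace ((Z ^ n : GL (Fin 2) ℂ) : Matrix (Fin 2) (Fin 2) ℂ) ↔
      (lam ^ n - 1) * (lam ^ (-m) - zeta ^ (-m)) * (a + d) * a * d +
          (lam ^ m * (lam ^ n - 1) + zeta ^ m) * a +
          (lam ^ (n + m) - (lam ^ n - 1) * zeta ^ m) * d =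
        (lam ^ n + 1) * lam ^ m * zeta ^ m) := by
  have hu : lam ^ m ≠ 0 := zpow_ne_zero m hlam
  have hv : zeta ^ m ≠ 0 := zpow_ne_zero m hzeta
  have hδ : lam ^ m * zeta ^ m ≠ 0 := mul_ne_zero hu hv
  have hL0 : lam ^ n ≠ 0 := zpow_ne_zero n hlam
  have hdet' : a * d - b * c = lam ^ m * zeta ^ m := by
    rw [hW, Matrix.det_fin_two_of] at hdet; exact hdet
  have hZn : ((Z ^ n : GL (Fin 2) ℂ) : Matrix (Fin 2) (Fin 2) ℂ) = !![lam ^ n, 0; 0, 1] := by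
    rw [diag_zpow_coe lam zeta hlam hzeta Z hZ n, hz]
  have hZm : ((Z ^ (-m) : GL (Fin 2) ℂ) : Matrix (Fin 2) (Fin 2) ℂ) =
      !![lam ^ (-m), 0; 0, zeta ^ (-m)] :=
    diag_zpow_coe lam zeta hlam hzeta Z hZ (-m)
  have h1 : (!![a, b; c, d] : Matrix (Fin 2) (Fin 2) ℂ) * !![d, -b; -c, a] =
      (lam ^ m * zeta ^ m) • (1 : Matrix (Fin 2) (Fin 2) ℂ) := by
    ext i j
    fin_cases i <;> fin_cases j <;>
      simp [Matrix.mul_apply, Fin.sum_univ_two, Matrix.one_apply, smul_eq_mul] <;>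
      first | ring1 | linear_combination hdet' | linear_combination -hdet'
  have hWinv : ((W⁻¹ : GL (Fin 2) ℂ) : Matrix (Fin 2) (Fin 2) ℂ) =
      (lam ^ m * zeta ^ m)⁻¹ • !![d, -b; -c, a] := by
    rw [Matrix.coe_units_inv, hW]
    apply Matrix.inv_eq_right_inv
    rw [Matrix.mul_smul, h1, smul_smul, inv_mul_cancel₀ hδ, one_smul]
  have hW2 : ((W ^ 2 : GL (Fin 2) ℂ) : Matrix (Fin 2) (Fin 2) ℂ) =
      !![a, b; c, d] * !![a, b; c, d] := by
    rw [Units.val_pow_eq_pow_val, hW, sq]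
  have hM : ((Z ^ n * W⁻¹ * Z ^ (-m) * W ^ 2 : GL (Fin 2) ℂ) : Matrix (Fin 2) (Fin 2) ℂ) =
      !![lam ^ n, 0; 0, 1] * ((lam ^ m * zeta ^ m)⁻¹ • !![d, -b; -c, a]) *
        !![lam ^ (-m), 0; 0, zeta ^ (-m)] * (!![a, b; c, d] * !![a, b; c, d]) := by
    rw [Units.val_mul, Units.val_mul, Units.val_mul, hZn, hZm, hWinv, hW2]
  have hTr2 : Matrix.trace ((Z ^ n : GL (Fin 2) ℂ) : Matrix (Fin 2) (Fin 2) ℂ) =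
      lam ^ n + 1 := by
    rw [hZn]; simp [Matrix.trace_fin_two]
  have hTM : Matrix.trace ((Z ^ n * W⁻¹ * Z ^ (-m) * W ^ 2 : GL (Fin 2) ℂ) :
      Matrix (Fin 2) (Fin 2) ℂ) =
      (lam ^ m * zeta ^ m)⁻¹ *
        (lam ^ n * (a ^ 2 * d * lam ^ (-m) - a * b * c * zeta ^ (-m) +
            b * c * d * (lam ^ (-m) - zeta ^ (-m))) +
          (a * b * c * (zeta ^ (-m) - lam ^ (-m)) + a * d ^ 2 * zeta ^ (-m) -
            b * c * d * lam ^ (-m))) := by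
    rw [hM]
    simp [Matrix.trace_fin_two, Matrix.mul_apply, Fin.sum_univ_two, smul_eq_mul]
    ring
  -- the key algebraic identity
  have key : (Matrix.trace ((Z ^ n * W⁻¹ * Z ^ (-m) * W ^ 2 : GL (Fin 2) ℂ) :
        Matrix (Fin 2) (Fin 2) ℂ) - (lam ^ n + 1)) * (lam ^ m * zeta ^ m) =
      ((lam ^ n - 1) * (lam ^ (-m) - zeta ^ (-m)) * (a + d) * a * d +
          (lam ^ m * (lam ^ n - 1) + zeta ^ m) * a +
          (lam ^ (n + m) - (lam ^ n - 1) * zeta ^ m) * d) -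
        (lam ^ n + 1) * lam ^ m * zeta ^ m := by
    have hx : lam ^ (-m) * lam ^ m = 1 := by
      rw [← zpow_add₀ hlam]; simp
    have hy : zeta ^ (-m) * zeta ^ m = 1 := by
      rw [← zpow_add₀ hzeta]; simp
    have hinv : (lam ^ m * zeta ^ m)⁻¹ = lam ^ (-m) * zeta ^ (-m) := by
      rw [mul_inv, _root_.zpow_neg, _root_.zpow_neg]
    rw [hTM, hinv, zpow_add₀ hlam]
    linear_combination
      (((lam ^ n * (a ^ 2 * d * lam ^ (-m) - a * b * c * zeta ^ (-m) +
            b * c * d * (lam ^ (-m) - zeta ^ (-m))) +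
          (a * b * c * (zeta ^ (-m) - lam ^ (-m)) + a * d ^ 2 * zeta ^ (-m) -
            b * c * d * lam ^ (-m))) * (zeta ^ (-m) * zeta ^ m)) +
        (-(lam ^ n * d * zeta ^ m) + a * zeta ^ m + d * zeta ^ m)) * hx +
      ((lam ^ n * (a ^ 2 * d * lam ^ (-m) - a * b * c * zeta ^ (-m) +
            b * c * d * (lam ^ (-m) - zeta ^ (-m))) +
          (a * b * c * (zeta ^ (-m) - lam ^ (-m)) + a * d ^ 2 * zeta ^ (-m) -
            b * c * d * lam ^ (-m))) +
        (lam ^ n * a * lam ^ m + lam ^ n * d * lam ^ m - a * lam ^ m)) * hy +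
      (-(-(lam ^ n * a * zeta ^ (-m)) + lam ^ n * d * lam ^ (-m) -
          lam ^ n * d * zeta ^ (-m) + a * zeta ^ (-m) - a * lam ^ (-m) -
          d * lam ^ (-m))) * hdet'
  have iff2 : Matrix.trace ((Z ^ n * W⁻¹ * Z ^ (-m) * W ^ 2 : GL (Fin 2) ℂ) :
        Matrix (Fin 2) (Fin 2) ℂ) =
      Matrix.trace ((Z ^ n : GL (Fin 2) ℂ) : Matrix (Fin 2) (Fin 2) ℂ) ↔
      (lam ^ n - 1) * (lam ^ (-m) - zeta ^ (-m)) * (a + d) * a * d +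
          (lam ^ m * (lam ^ n - 1) + zeta ^ m) * a +
          (lam ^ (n + m) - (lam ^ n - 1) * zeta ^ m) * d =
        (lam ^ n + 1) * lam ^ m * zeta ^ m := by
    rw [hTr2]
    constructor
    · intro h
      have h0 : (Matrix.trace ((Z ^ n * W⁻¹ * Z ^ (-m) * W ^ 2 : GL (Fin 2) ℂ) :
          Matrix (Fin 2) (Fin 2) ℂ) - (lam ^ n + 1)) * (lam ^ m * zeta ^ m) = 0 := by
        rw [h]; ring
      rw [key] at h0
      exact sub_eq_zero.mp h0
    · intro h
      have h0 : (Matrix.trace ((Z ^ n * W⁻¹ * Z ^ (-m) * W ^ 2 : GL (Fin 2) ℂ) :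
          Matrix (Fin 2) (Fin 2) ℂ) - (lam ^ n + 1)) * (lam ^ m * zeta ^ m) = 0 := by
        rw [key, h]; ring
      rcases mul_eq_zero.mp h0 with h1 | h1
      · exact sub_eq_zero.mp h1
      · exact absurd h1 hδ
  refine ⟨?_, iff2⟩
  constructor
  · rintro ⟨Y, hY⟩
    rw [hY]
    rw [Units.val_mul, Units.val_mul]
    exact Matrix.trace_units_conj' Y ((Z ^ n : GL (Fin 2) ℂ) : Matrix (Fin 2) (Fin 2) ℂ)
  · intro htr
    rw [hTr2] at htr
    -- determinant of the big matrix
    have hdetM : Matrix.det ((Z ^ n * W⁻¹ * Z ^ (-m) * W ^ 2 : GL (Fin 2) ℂ) :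
        Matrix (Fin 2) (Fin 2) ℂ) = lam ^ n := by
      have hxy : lam ^ (-m) * zeta ^ (-m) = (lam ^ m * zeta ^ m)⁻¹ := by
        rw [_root_.zpow_neg, _root_.zpow_neg, mul_inv]
      rw [hM, Matrix.det_mul, Matrix.det_mul, Matrix.det_mul, Matrix.det_mul,
        Matrix.det_smul]
      simp only [Matrix.det_fin_two_of, Fintype.card_fin]
      have h2 : d * a - -b * -c = lam ^ m * zeta ^ m := by linear_combination hdet'
      rw [h2, hdet', hxy]
      field_simp
      ring
    set A := ((Z ^ n * W⁻¹ * Z ^ (-m) * W ^ 2 : GL (Fin 2) ℂ) : Matrix (Fin 2) (Fin 2) ℂ)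
      with hA
    have htr' : A 0 0 + A 1 1 = lam ^ n + 1 := by
      rw [Matrix.trace_fin_two] at htr; exact htr
    have hdet2 : A 0 0 * A 1 1 - A 0 1 * A 1 0 = lam ^ n := by
      rw [← Matrix.det_fin_two]; exact hdetM
    obtain ⟨Y, hY⟩ := conj_diag (lam ^ n) (A 0 0) (A 0 1) (A 1 0) (A 1 1) hL0 hl htr' hdet2
    refine ⟨Y, Units.ext ?_⟩
    show A = ((Y⁻¹ * Z ^ n * Y : GL (Fin 2) ℂ) : Matrix (Fin 2) (Fin 2) ℂ)
    rw [Units.val_mul, Units.val_mul, hZn, Matrix.eta_fin_two A]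
    exact hY
end
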